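/- If R_c ∈ (1.42, 1.43) and x_c > 0 satisfy f_{R_c}(x_c) = 0 and f'_{R_c}(x_c) = 0, then for every R with R_c < R < 3 the cubic f_R has exactly two distinct roots in (0, ∞); consequently in this rainfall range the vegetation–water system is bistable, possessing exactly three equilibria with x₁ ≥ 0. -/
import Mathlib


/-- Drift of the vegetation–water system with ρ = 1, K = 10, β = 3, x₀ = 1, α = 1, λ = 0.12. -/
noncomputable def bVW (R : ℝ) (p : ℝ × ℝ) : ℝ × ℝ :=
  (p.1 * (p.2 - p.1 / 10) - 3 * p.1 / (p.1 + 1),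
   R - p.2 - 0.12 * p.1 * p.2)

/-- The cubic whose positive roots give the nontrivial equilibria. -/
noncomputable def fR (R x : ℝ) : ℝ :=
  0.12 * x ^ 3 + 1.12 * x ^ 2 + (4.6 - 10 * R) * x + (30 - 10 * R)

private lemma three_roots_false {R a b c : ℝ} (ha : 0 < a) (hb : 0 < b) (hc : 0 < c)
    (hab : a ≠ b) (hbc : b ≠ c) (hac : a ≠ c)
    (fa : fR R a = 0) (fb : fR R b = 0) (fc : fR R c = 0) : False := by
  unfold fR at fa fb fc
  have e1 : (a - b) * (0.12*(a^2+a*b+b^2) + 1.12*(a+b) + (4.6 - 10*R)) = 0 := by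
    linear_combination fa - fb
  have e2 : (a - c) * (0.12*(a^2+a*c+c^2) + 1.12*(a+c) + (4.6 - 10*R)) = 0 := by
    linear_combination fa - fc
  have h1 := (mul_eq_zero.mp e1).resolve_left (sub_ne_zero.mpr hab)
  have h2 := (mul_eq_zero.mp e2).resolve_left (sub_ne_zero.mpr hac)
  have e3 : (b - c) * (0.12*(a+b+c) + 1.12) = 0 := by linear_combination h1 - h2
  have h3 := (mul_eq_zero.mp e3).resolve_left (sub_ne_zero.mpr hbc)
  nlinarith

/-- If R_c ∈ (1.42, 1.43) and x_c > 0 give a double root of f_{R_c}, then for every R with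
R_c < R < 3 the cubic f_R has exactly two distinct positive roots, and the system is bistable
with exactly three equilibria having x₁ ≥ 0. -/
theorem bistable_between_Rc_and_three (Rc xc : ℝ)
    (hRc : Rc ∈ Set.Ioo (1.42 : ℝ) 1.43) (hxc : 0 < xc)
    (hroot : fR Rc xc = 0) (hderiv : deriv (fR Rc) xc = 0) :
    ∀ R : ℝ, Rc < R → R < 3 →
      {x : ℝ | 0 < x ∧ fR R x = 0}.ncard = 2 ∧
      {p : ℝ × ℝ | 0 ≤ p.1 ∧ bVW R p = (0, 0)}.ncard = 3 := by
  obtain ⟨hRc1, hRc2⟩ := hRc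
  intro R hR1 hR2
  have hR0 : (0:ℝ) < R := by linarith
  have hcont : Continuous (fR R) := by
    unfold fR; fun_prop
  have hfxc : fR R xc < 0 := by
    have key : fR R xc = -10 * (R - Rc) * (xc + 1) := by
      unfold fR at hroot ⊢; linear_combination hroot
    rw [key]; nlinarith
  have hf0 : 0 < fR R 0 := by unfold fR; nlinarith
  have hf100 : 0 < fR R 100 := by unfold fR; nlinarith
  have hxc100 : xc < 100 := by
    by_contra hcon
    push_neg at hcon
    unfold fR at hroot
    nlinarith [sq_nonneg xc, mul_pos hxc hxc, mul_pos (mul_pos hxc hxc) hxc]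
  obtain ⟨A, hAmem, hfA⟩ :=
    intermediate_value_Ioo' hxc.le hcont.continuousOn
      (Set.mem_Ioo.mpr ⟨hfxc, hf0⟩)
  obtain ⟨B, hBmem, hfB⟩ :=
    intermediate_value_Ioo hxc100.le hcont.continuousOn
      (Set.mem_Ioo.mpr ⟨hfxc, hf100⟩)
  have hA0 : 0 < A := hAmem.1
  have hB0 : 0 < B := lt_trans hxc hBmem.1
  have hABlt : A < B := lt_trans hAmem.2 hBmem.1
  have hAB : A ≠ B := ne_of_lt hABlt
  -- the positive root set is exactly {A, B}
  have hS : {x : ℝ | 0 < x ∧ fR R x = 0} = {A, B} := by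
    ext x
    simp only [Set.mem_setOf_eq, Set.mem_insert_iff, Set.mem_singleton_iff]
    constructor
    · rintro ⟨hx0, hxf⟩
      by_contra hcon
      push_neg at hcon
      exact three_roots_false hA0 hB0 hx0 hAB (Ne.symm hcon.2) (Ne.symm hcon.1) hfA hfB hxf
    · rintro (rfl | rfl)
      · exact ⟨hA0, hfA⟩
      · exact ⟨hB0, hfB⟩
  have hcard1 : {x : ℝ | 0 < x ∧ fR R x = 0}.ncard = 2 := by
    rw [hS]; exact Set.ncard_pair hAB
  refine ⟨hcard1, ?_⟩
  -- equilibria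
  have hdA : (1 + 0.12 * A) ≠ 0 := by positivity
  have hdB : (1 + 0.12 * B) ≠ 0 := by positivity
  have hT : {p : ℝ × ℝ | 0 ≤ p.1 ∧ bVW R p = (0, 0)} =
      {((0:ℝ), R), (A, R / (1 + 0.12 * A)), (B, R / (1 + 0.12 * B))} := by
    ext ⟨x, y⟩
    simp only [Set.mem_setOf_eq, bVW, Prod.mk.injEq, Set.mem_insert_iff,
      Set.mem_singleton_iff]
    constructor
    · rintro ⟨hx0, h1, h2⟩
      have hdx : (0:ℝ) < 1 + 0.12 * x := by nlinarith
      have hy : y = R / (1 + 0.12 * x) := by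
        field_simp
        linarith [h2]
      rcases eq_or_lt_of_le hx0 with h | hxp
      · left
        subst h
        norm_num at h2 ⊢
        linarith
      · have hx1 : (0:ℝ) < x + 1 := by linarith
        have e1 : (y - x / 10) * (x + 1) = 3 := by
          have h1' : x * ((y - x / 10) * (x + 1) - 3) = 0 := by
            field_simp at h1
            linear_combination h1 / 10
          have := (mul_eq_zero.mp h1').resolve_left (ne_of_gt hxp)
          linarith
        have hfx : fR R x = 0 := by
          unfold fR
          linear_combination (-(10 * (1 + 0.12 * x))) * e1 - 10 * (x + 1) * h2
        have hxS : x = A ∨ x = B := by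
          have hxmem : x ∈ ({A, B} : Set ℝ) := by
            rw [← hS]; exact ⟨hxp, hfx⟩
          simpa using hxmem
        rcases hxS with rfl | rfl
        · right; left; exact ⟨rfl, hy⟩
        · right; right; exact ⟨rfl, hy⟩
    · rintro (⟨rfl, rfl⟩ | ⟨rfl, rfl⟩ | ⟨rfl, rfl⟩)
      · norm_num
      · refine ⟨hA0.le, ?_, ?_⟩
        · have hA1 : x + 1 ≠ 0 := by intro h; linarith
          field_simp
          unfold fR at hfA
          linear_combination (-x) * hfA
        · field_simp; ring
      · refine ⟨hB0.le, ?_, ?_⟩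
        · have hB1 : x + 1 ≠ 0 := by intro h; linarith
          field_simp
          unfold fR at hfB
          linear_combination (-x) * hfB
        · field_simp; ring
  have hne1 : ((0:ℝ), R) ∉
      ({(A, R / (1 + 0.12 * A)), (B, R / (1 + 0.12 * B))} : Set (ℝ × ℝ)) := by
    simp only [Set.mem_insert_iff, Set.mem_singleton_iff]
    rintro (h | h)
    · exact absurd (Prod.ext_iff.mp h).1.symm (ne_of_gt hA0)
    · exact absurd (Prod.ext_iff.mp h).1.symm (ne_of_gt hB0)
  have hne2 : ((A : ℝ), R / (1 + 0.12 * A)) ∉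
      ({(B, R / (1 + 0.12 * B))} : Set (ℝ × ℝ)) := by
    intro h
    exact hAB (Prod.ext_iff.mp (Set.mem_singleton_iff.mp h)).1
  rw [hT, Set.ncard_insert_of_notMem hne1, Set.ncard_insert_of_notMem hne2,
    Set.ncard_singleton]
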